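/- Let a, b, p, q be real numbers with b > q ≥ 0, and set b' = √(b² − q²). Then there exists a linear automorphism φ of ℝ⁶ such that φ(β_{a,b,p,q}(x, y)) = β_{a,b',p,0}(φ(x), φ(y)) for all x, y ∈ ℝ⁶; that is, the 2-step nilpotent Lie algebras (ℝ⁶, β_{a,b,p,q}) and (ℝ⁶, β_{a,b',p,0}) are isomorphic. -/

import Mathlib

/-!
Rescaling `e₁, e₃` by `r` and `e₂, e₄` by `r⁻¹` leaves the `e₅`-component of the bracket unchanged
(each of its terms picks up a factor `r r⁻¹ = 1`) and multiplies the two terms of the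
`e₆`-component by `r²` and `r⁻²`. With `b' = √(b² − q²)` and `r² = (b + q)/b'` one gets
`b' r² = b + q` and `b' r⁻² = b − q`, so `diag(r, r⁻¹, r, r⁻¹, 1, 1)` carries `β_{a,b,p,q}` to
`β_{a,b',p,0}`.
-/

/-- The 2-step nilpotent bracket `β_{a,b,p,q}` on `ℝ⁶`, with
`β(e₁,e₂) = (a+p)e₅`, `β(e₃,e₄) = (a−p)e₅`, `β(e₁,e₃) = (b+q)e₆`, `β(e₂,e₄) = −(b−q)e₆`. -/
noncomputable def betaBr (a b p q : ℝ) (x y : Fin 6 → ℝ) : Fin 6 → ℝ :=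
  ((a + p) * (x 0 * y 1 - x 1 * y 0) + (a - p) * (x 2 * y 3 - x 3 * y 2)) •
    (Pi.single 4 1 : Fin 6 → ℝ) +
  ((b + q) * (x 0 * y 2 - x 2 * y 0) - (b - q) * (x 1 * y 3 - x 3 * y 1)) •
    (Pi.single 5 1 : Fin 6 → ℝ)

def diagEquiv {R ι : Type*} [CommSemiring R] (c : ι → Rˣ) : (ι → R) ≃ₗ[R] (ι → R) :=
  LinearEquiv.piCongrRight fun i => LinearEquiv.smulOfUnit (c i)

@[simp]
theorem diagEquiv_apply {R ι : Type*} [CommSemiring R] (c : ι → Rˣ) (z : ι → R) (i : ι) :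
    diagEquiv c z i = c i * z i :=
  rfl

theorem diagEquiv_betaBr (a b p q B Q : ℝ) (r : ℝˣ) (hr : (B + Q) * r ^ 2 = b + q)
    (hr' : (B - Q) * (r : ℝ)⁻¹ ^ 2 = b - q) (x y : Fin 6 → ℝ) :
    diagEquiv ![r, r⁻¹, r, r⁻¹, 1, 1] (betaBr a b p q x y) =
      betaBr a B p Q (diagEquiv ![r, r⁻¹, r, r⁻¹, 1, 1] x)
        (diagEquiv ![r, r⁻¹, r, r⁻¹, 1, 1] y) := by
  have hrr : (r : ℝ) * (r : ℝ)⁻¹ = 1 := mul_inv_cancel₀ r.ne_zero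
  ext i
  fin_cases i <;>
    simp only [betaBr, diagEquiv_apply, Pi.add_apply, Pi.smul_apply, smul_eq_mul, Pi.single_apply,
    Fin.isValue, Fin.reduceFinMk, Fin.reduceEq, Matrix.cons_val, Units.val_one, Units.val_inv_eq_inv_val,
    if_true, if_false, mul_one, mul_zero, add_zero, zero_add, one_mul]
  · linear_combination (-((a + p) * (x 0 * y 1 - x 1 * y 0) +
      (a - p) * (x 2 * y 3 - x 3 * y 2))) * hrr
  · linear_combination (-(x 0 * y 2 - x 2 * y 0)) * hr + (x 1 * y 3 - x 3 * y 1) * hr'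

/-- for `b > q ≥ 0` and `b' = √(b² − q²)`, the Lie algebras
`(ℝ⁶, β_{a,b,p,q})` and `(ℝ⁶, β_{a,b',p,0})` are isomorphic. -/
theorem beta_iso_q_zero (a b p q : ℝ) (hq : 0 ≤ q) (hb : q < b) :
    ∃ φ : (Fin 6 → ℝ) ≃ₗ[ℝ] (Fin 6 → ℝ),
      ∀ x y : Fin 6 → ℝ,
        φ (betaBr a b p q x y) = betaBr a (Real.sqrt (b ^ 2 - q ^ 2)) p 0 (φ x) (φ y) := by
  set B := Real.sqrt (b ^ 2 - q ^ 2)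
  have hbq : 0 < b + q := by linarith
  have hB2 : B ^ 2 = (b + q) * (b - q) := by
    rw [Real.sq_sqrt (by nlinarith)]; ring
  have hB : 0 < B := Real.sqrt_pos.mpr (by nlinarith)
  have hr2 : Real.sqrt ((b + q) / B) ^ 2 = (b + q) / B := Real.sq_sqrt (by positivity)
  set r := Units.mk0 (Real.sqrt ((b + q) / B)) (by positivity)
  refine ⟨diagEquiv ![r, r⁻¹, r, r⁻¹, 1, 1], diagEquiv_betaBr a b p q B 0 r ?_ ?_⟩
  · simp only [r, Units.val_mk0, add_zero, hr2]
    field_simp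
  · simp only [r, Units.val_mk0, sub_zero, inv_pow, hr2]
    field_simp
    linear_combination hB2
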